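/- arXiv:1406.1045 — 4 statements merged into one kernel-verified Lean document; each statement's English description precedes it below -/
import Mathlib

section
/- Let P be an orthogonal projection on ℂ^E, L a self-adjoint operator on ℂ^E with P^⊥ L P^⊥ = L, and let k ∈ ℝ, k ≠ 0. Then the matrix P + L + ik·P^⊥ is invertible. -/
open Matrix Complex

/-- For an orthogonal projection `P` on `ℂ^E`, a Hermitian `L` with
`P^⊥ L P^⊥ = L`, and a nonzero real `k`, the matrix `P + L + ik P^⊥` is
invertible. -/
theorem projection_plus_L_plus_ik_invertible
    (E : ℕ) (P L : Matrix (Fin E) (Fin E) ℂ)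
    (hP : P.IsHermitian) (hP2 : P * P = P)
    (hL : L.IsHermitian) (hLP : (1 - P) * L * (1 - P) = L)
    (k : ℝ) (hk : k ≠ 0) :
    IsUnit (P + L + (Complex.I * (k : ℂ)) • (1 - P)) := by
  set M := P + L + (Complex.I * (k : ℂ)) • (1 - P) with hM
  have hPL : P * L = 0 := by
    rw [← hLP]
    have : P * (1 - P) = 0 := by
      rw [mul_sub, mul_one, hP2, sub_self]
    rw [← mul_assoc, ← mul_assoc, this, zero_mul, zero_mul]
  have hPM : P * M = P := by
    rw [hM, mul_add, mul_add, hPL, mul_smul_comm, mul_sub, mul_one, hP2, sub_self,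
      smul_zero, add_zero, add_zero]
  -- kernel trivial
  have hker : ∀ x : Fin E → ℂ, M *ᵥ x = 0 → x = 0 := by
    intro x hx
    have hPx : P *ᵥ x = 0 := by
      have := congrArg (fun v => P *ᵥ v) hx
      simpa [mulVec_mulVec, hPM] using this
    have hLx : L *ᵥ x + (Complex.I * (k : ℂ)) • x = 0 := by
      have : M *ᵥ x = L *ᵥ x + (Complex.I * (k : ℂ)) • x := by
        rw [hM, add_mulVec, add_mulVec, smul_mulVec, sub_mulVec, one_mulVec, hPx,
          zero_add, smul_sub, smul_zero, sub_zero]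
      rwa [this] at hx
    -- dot with star x
    have key : star x ⬝ᵥ (L *ᵥ x) + (Complex.I * (k : ℂ)) * (star x ⬝ᵥ x) = 0 := by
      have := congrArg (fun v => star x ⬝ᵥ v) hLx
      simpa [dotProduct_add, dotProduct_smul, smul_eq_mul] using this
    have hherm : (star x ⬝ᵥ (L *ᵥ x)).im = 0 := by
      have h1 : star x ⬝ᵥ (L *ᵥ x) = star (star (L *ᵥ x) ⬝ᵥ x) := star_dotProduct _ _
      have h2 : star (L *ᵥ x) ⬝ᵥ x = star x ⬝ᵥ (L *ᵥ x) := by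
        rw [star_mulVec, hL.eq]
        exact (dotProduct_mulVec (star x) L x).symm
      have : star (star x ⬝ᵥ (L *ᵥ x)) = star x ⬝ᵥ (L *ᵥ x) := by
        exact ((congrArg star h1).trans (star_star _)).trans h2
      exact Complex.conj_eq_iff_im.mp this
    have hS : (star x ⬝ᵥ x) = ((∑ i, Complex.normSq (x i) : ℝ) : ℂ) := by
      push_cast
      simp [dotProduct, Complex.normSq_eq_conj_mul_self]
    have him := congrArg Complex.im key
    rw [hS] at him
    simp [hherm, Complex.add_im, Complex.mul_im] at him
    rcases him with h | h
    · exact absurd h hk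
    · have : ∀ i, x i = 0 := by
        intro i
        have hsum : ∑ i, Complex.normSq (x i) = 0 := h
        have := (Finset.sum_eq_zero_iff_of_nonneg (fun i _ => Complex.normSq_nonneg (x i))).mp hsum i (Finset.mem_univ i)
        exact Complex.normSq_eq_zero.mp this
      funext i; exact this i
  -- conclude
  rw [Matrix.isUnit_iff_isUnit_det, isUnit_iff_ne_zero]
  intro hdet
  obtain ⟨v, hv, hv0⟩ := (Matrix.exists_mulVec_eq_zero_iff).mpr hdet
  exact hv (hker v hv0)
end

section
/- Let P be an orthogonal projection on ℂ^E and L Hermitian with P^⊥ L P^⊥ = L. Then as k → ∞ along the reals, the scattering matrix S(k) = -(P + L + ik P^⊥)^{-1}(P + L - ik P^⊥) converges to 1 - 2P. -/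
/-! With `Q = 1 - P` and `c = ik`, the relations `PL = 0` and `QL = L` give the factorisation
`P + L + cQ = (P + cQ)(1 + c⁻¹L)`, and `P + cQ` has inverse `P + c⁻¹Q`. Hence
`S(k) = (1 + c⁻¹L)⁻¹(1 - 2P - c⁻¹L)`, a function of `c⁻¹` that is continuous at `0` because
matrix inversion is continuous at `1`; and `c⁻¹ → 0`. -/

open Matrix Complex Filter Topology

attribute [local instance] Matrix.normedAddCommGroup

section Algebra

variable {R : Type*} [Ring R] {P L : R}

theorem IsIdempotentElem.mul_eq_zero_of_one_sub_mul_mul_one_sub (hP : IsIdempotentElem P)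
    (hL : (1 - P) * L * (1 - P) = L) : P * L = 0 := by
  rw [← hL, ← mul_assoc, ← mul_assoc, hP.mul_one_sub_self, zero_mul, zero_mul]

variable {𝕜 : Type*} [Field 𝕜] [Algebra 𝕜 R] {c : 𝕜}

theorem IsIdempotentElem.add_smul_one_sub_mul_add_inv_smul (hP : IsIdempotentElem P)
    (hc : c ≠ 0) : (P + c • (1 - P)) * (P + c⁻¹ • (1 - P)) = 1 := by
  simp only [mul_add, add_mul, mul_smul_comm, smul_mul_assoc, smul_smul, hP.eq,
    hP.mul_one_sub_self, hP.one_sub_mul_self, hP.one_sub.eq, inv_mul_cancel₀ hc, one_smul,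
    smul_zero, add_zero, zero_add]
  exact add_sub_cancel P 1

theorem IsIdempotentElem.add_add_smul_one_sub_eq_mul (hP : IsIdempotentElem P)
    (hL : (1 - P) * L * (1 - P) = L) (hc : c ≠ 0) :
    P + L + c • (1 - P) = (P + c • (1 - P)) * (1 + c⁻¹ • L) := by
  have hPL : P * L = 0 := hP.mul_eq_zero_of_one_sub_mul_mul_one_sub hL
  have hQL : (1 - P) * L = L := by rw [sub_mul, one_mul, hPL, sub_zero]
  simp only [mul_add, mul_one, mul_smul_comm, smul_mul_assoc, smul_smul, add_mul, hPL, hQL,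
    inv_mul_cancel₀ hc, one_smul, zero_add]
  abel

theorem IsIdempotentElem.add_inv_smul_one_sub_mul_add_sub_smul (hP : IsIdempotentElem P)
    (hL : (1 - P) * L * (1 - P) = L) (hc : c ≠ 0) :
    (P + c⁻¹ • (1 - P)) * (P + L - c • (1 - P)) = P + c⁻¹ • L - (1 - P) := by
  have hPL : P * L = 0 := hP.mul_eq_zero_of_one_sub_mul_mul_one_sub hL
  have hQL : (1 - P) * L = L := by rw [sub_mul, one_mul, hPL, sub_zero]
  rw [mul_sub]
  simp only [mul_add, add_mul, mul_smul_comm, smul_mul_assoc, smul_smul, hP.eq,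
    hP.mul_one_sub_self, hP.one_sub_mul_self, hP.one_sub.eq, hPL, hQL, mul_inv_cancel₀ hc,
    one_smul, smul_zero, add_zero, zero_add]

end Algebra

section Matrix

variable {n 𝕜 : Type*} [Fintype n] [DecidableEq n] [Field 𝕜] {P L : Matrix n n 𝕜} {c : 𝕜}

/-- The scattering matrix `S(k)` of the paper is `scatteringMatrix P L (I * k)`. -/
noncomputable def scatteringMatrix (P L : Matrix n n 𝕜) (c : 𝕜) : Matrix n n 𝕜 :=
  -((P + L + c • (1 - P))⁻¹ * (P + L - c • (1 - P)))

theorem IsIdempotentElem.scatteringMatrix_eq (hP : IsIdempotentElem P)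
    (hL : (1 - P) * L * (1 - P) = L) (hc : c ≠ 0) :
    scatteringMatrix P L c = (1 + c⁻¹ • L)⁻¹ * (1 - 2 • P - c⁻¹ • L) := by
  -- `Matrix.mul_inv_rev` holds even for singular factors, so `1 + c⁻¹ • L` need not be invertible.
  rw [scatteringMatrix, hP.add_add_smul_one_sub_eq_mul hL hc, Matrix.mul_inv_rev,
    Matrix.inv_eq_right_inv (hP.add_smul_one_sub_mul_add_inv_smul hc), mul_assoc,
    hP.add_inv_smul_one_sub_mul_add_sub_smul hL hc, ← mul_neg]
  congr 1
  abel

end Matrix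

theorem Matrix.tendsto_one_add_smul_inv_mul_sub_smul {n 𝕜 : Type*} [Fintype n] [DecidableEq n]
    [NormedField 𝕜] (L M : Matrix n n 𝕜) :
    Tendsto (fun z : 𝕜 => (1 + z • L)⁻¹ * (M - z • L)) (𝓝 0) (𝓝 M) := by
  have hinv : ContinuousAt (fun z : 𝕜 => (1 + z • L)⁻¹) 0 := by
    refine ContinuousAt.comp (g := Inv.inv) ?_ (by fun_prop)
    simp only [zero_smul, add_zero]
    exact continuousAt_matrix_inv _ (by simp [continuousAt_inv₀ one_ne_zero])
  have hsub : ContinuousAt (fun z : 𝕜 => M - z • L) 0 := by fun_prop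
  simpa using hinv.tendsto.mul hsub.tendsto

theorem RCLike.tendsto_inv_mul_ofReal_atTop {𝕜 : Type*} [RCLike 𝕜] (a : 𝕜) :
    Tendsto (fun k : ℝ => (a * k)⁻¹) atTop (𝓝 0) := by
  have := (tendsto_inv₀_cobounded.comp (tendsto_ofReal_atTop_cobounded 𝕜)).const_mul a⁻¹
  rw [mul_zero] at this
  exact this.congr fun k => (mul_inv a k).symm

theorem scattering_matrix_limit_general
    (E : ℕ) (P L : Matrix (Fin E) (Fin E) ℂ)
    (hP2 : P * P = P)
    (hLP : (1 - P) * L * (1 - P) = L) :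
    Tendsto
      (fun k : ℝ =>
        -((P + L + (Complex.I * (k : ℂ)) • (1 - P))⁻¹
            * (P + L - (Complex.I * (k : ℂ)) • (1 - P))))
      atTop (nhds (1 - 2 • P)) := by
  have hS : ∀ᶠ k : ℝ in atTop,
      (1 + (I * k)⁻¹ • L)⁻¹ * (1 - 2 • P - (I * k)⁻¹ • L) = scatteringMatrix P L (I * k) := by
    filter_upwards [eventually_ne_atTop 0] with k hk
    have hc : I * k ≠ 0 := mul_ne_zero I_ne_zero (ofReal_ne_zero.2 hk)
    exact (IsIdempotentElem.scatteringMatrix_eq hP2 hLP hc).symm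
  exact ((Matrix.tendsto_one_add_smul_inv_mul_sub_smul L _).comp
    (RCLike.tendsto_inv_mul_ofReal_atTop I)).congr' hS

/-- As `k → ∞` along the reals, the scattering matrix
`S(k) = -(P + L + ik P^⊥)⁻¹ (P + L - ik P^⊥)` converges to `1 - 2P`. -/
theorem scattering_matrix_limit
    (E : ℕ) (P L : Matrix (Fin E) (Fin E) ℂ)
    (hP : P.IsHermitian) (hP2 : P * P = P)
    (hL : L.IsHermitian) (hLP : (1 - P) * L * (1 - P) = L) :
    Tendsto
      (fun k : ℝ =>
        -((P + L + (Complex.I * (k : ℂ)) • (1 - P))⁻¹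
            * (P + L - (Complex.I * (k : ℂ)) • (1 - P))))
      atTop (nhds (1 - 2 • P)) :=
  scattering_matrix_limit_general E P L hP2 hLP
end

section
/- Let P be an orthogonal projection on ℂ^E, L Hermitian with P^⊥ L P^⊥ = L, and k real with |k| > ‖L‖. Then (P + L + ik P^⊥)^{-1} = P - (i/k) Σ_{r=0}^∞ k^{-r} P^⊥ (iL)^r P^⊥, the series converging absolutely. -/
open Matrix Complex

attribute [local instance] Matrix.linftyOpNormedRing
attribute [local instance] Matrix.linftyOpNormedAlgebra

/-!
Write `Q = 1 - P` and `c = i k`. Since `L = Q L Q`, the operator `P + L + c Q` is block diagonal: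
it is the identity on the range of `P` and `c (1 + c⁻¹ L)` on the range of `Q`. The second block
is inverted by the Neumann series `∑ y^r` of `y = -c⁻¹ L = k⁻¹ (i L)`, which converges because
`‖y‖ = ‖L‖ / |k| < 1`; finally `c⁻¹ = -i/k`.
-/

section Ring

variable {R : Type*} [Ring R] {p l : R}

theorem IsIdempotentElem.mul_eq_zero_of_one_sub_mul_mul_one_sub_s9 (hp : IsIdempotentElem p)
    (hl : (1 - p) * l * (1 - p) = l) : p * l = 0 := by
  rw [← hl, ← mul_assoc, ← mul_assoc, hp.mul_one_sub_self, zero_mul, zero_mul]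

theorem IsIdempotentElem.mul_eq_zero_of_one_sub_mul_mul_one_sub' (hp : IsIdempotentElem p)
    (hl : (1 - p) * l * (1 - p) = l) : l * p = 0 := by
  rw [← hl, mul_assoc, hp.one_sub_mul_self, mul_zero]

theorem IsIdempotentElem.add_add_smul_one_sub_mul_eq_one {𝕜 : Type*} [Field 𝕜] [Algebra 𝕜 R]
    (hp : IsIdempotentElem p) (hpl : p * l = 0) (hlp : l * p = 0) {c : 𝕜} (hc : c ≠ 0)
    {g : R} (hg : (1 + c⁻¹ • l) * g = 1) :
    (p + l + c • (1 - p)) * (p + c⁻¹ • ((1 - p) * g * (1 - p))) = 1 := by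
  have hql : (1 - p) * l = l := by rw [sub_mul, one_mul, hpl, sub_zero]
  have hlq : l * (1 - p) = l := by rw [mul_sub, mul_one, hlp, sub_zero]
  have hAp : (p + l + c • (1 - p)) * p = p := by
    rw [add_mul, add_mul, smul_mul_assoc, hp.eq, hlp, hp.one_sub_mul_self, smul_zero,
      add_zero, add_zero]
  have hAq : (p + l + c • (1 - p)) * (1 - p) = l + c • (1 - p) := by
    rw [add_mul, add_mul, smul_mul_assoc, hp.mul_one_sub_self, hlq, hp.one_sub.eq, zero_add]
  have hAqg : (l + c • (1 - p)) * g = c • (1 - p) := by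
    have h : (1 - p) * ((1 + c⁻¹ • l) * g) = 1 - p := by rw [hg, mul_one]
    rw [← mul_assoc, mul_add, mul_one, mul_smul_comm, hql] at h
    rw [show l + c • (1 - p) = c • (1 - p + c⁻¹ • l) by
      rw [smul_add, smul_smul, mul_inv_cancel₀ hc, one_smul, add_comm], smul_mul_assoc, h]
  rw [mul_add, hAp, mul_smul_comm, ← mul_assoc, ← mul_assoc, hAq, hAqg, smul_mul_assoc,
    hp.one_sub.eq, smul_smul, inv_mul_cancel₀ hc, one_smul, add_sub_cancel]

end Ring

theorem summable_norm_mul_pow_mul {R : Type*} [NormedRing R] {y : R} (hy : ‖y‖ < 1) (a b : R) :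
    Summable fun n : ℕ => ‖a * y ^ n * b‖ :=
  ((summable_norm_geometric_of_norm_lt_one hy).mul_left (‖a‖ * ‖b‖)).of_nonneg_of_le
    (fun _ => norm_nonneg _) fun _ => norm_mul₃_le.trans_eq (by ring)

theorem Summable.tsum_mul_pow_mul {R : Type*} [Ring R] [TopologicalSpace R] [IsTopologicalRing R]
    [T2Space R] {y : R} (hy : Summable fun n : ℕ => y ^ n) (a b : R) :
    ∑' n : ℕ, a * y ^ n * b = a * (∑' n : ℕ, y ^ n) * b := by
  rw [(hy.mul_left a).tsum_mul_right, hy.tsum_mul_left]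

theorem inverse_series_expansion_general
    (E : ℕ) (P L : Matrix (Fin E) (Fin E) ℂ)
    (hP2 : P * P = P)
    (hLP : (1 - P) * L * (1 - P) = L)
    (k : ℝ) (hk : ‖L‖ < |k|) :
    Summable
      (fun r : ℕ => ‖((k : ℂ) ^ (-(r : ℤ))) •
          ((1 - P) * (Complex.I • L) ^ r * (1 - P))‖) ∧
    (P + L + (Complex.I * (k : ℂ)) • (1 - P))⁻¹
      = P - (Complex.I / (k : ℂ)) •
          ∑' r : ℕ, ((k : ℂ) ^ (-(r : ℤ))) •
            ((1 - P) * (Complex.I • L) ^ r * (1 - P)) := by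
  have hk0 : (k : ℂ) ≠ 0 := by exact_mod_cast abs_pos.mp ((norm_nonneg L).trans_lt hk)
  set y : Matrix (Fin E) (Fin E) ℂ := (k : ℂ)⁻¹ • (I • L) with hy_def
  have hterm (r : ℕ) : (k : ℂ) ^ (-(r : ℤ)) • ((1 - P) * (I • L) ^ r * (1 - P))
      = (1 - P) * y ^ r * (1 - P) := by
    simp only [hy_def, smul_pow, mul_smul_comm, smul_mul_assoc, smul_smul, _root_.zpow_neg,
      zpow_natCast, mul_pow, inv_pow]
  have hy : ‖y‖ < 1 := by
    rw [hy_def, norm_smul, norm_smul, norm_I, one_mul, norm_inv, norm_real, Real.norm_eq_abs,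
      inv_mul_lt_one₀ (abs_pos.mpr (mod_cast hk0))]
    exact hk
  have hLy : (I * k)⁻¹ • L = -y := by
    rw [hy_def, smul_smul, ← neg_smul]
    congr 1
    field_simp
    rw [I_sq, neg_neg]
  have hcoeff : -(I / k) = (I * k)⁻¹ := by
    field_simp
    rw [I_sq, neg_neg]
  simp_rw [hterm]
  refine ⟨summable_norm_mul_pow_mul hy _ _, ?_⟩
  have hgeom : Summable fun n : ℕ => y ^ n := summable_geometric_of_norm_lt_one hy
  rw [hgeom.tsum_mul_pow_mul, sub_eq_add_neg P, ← neg_smul, hcoeff]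
  have hP : IsIdempotentElem P := hP2
  refine Matrix.inv_eq_right_inv (hP.add_add_smul_one_sub_mul_eq_one
    (hP.mul_eq_zero_of_one_sub_mul_mul_one_sub_s9 hLP)
    (hP.mul_eq_zero_of_one_sub_mul_mul_one_sub' hLP) (mul_ne_zero I_ne_zero hk0) ?_)
  rw [hLy, ← sub_eq_add_neg]
  exact mul_neg_geom_series y hy

/-- For `|k| > ‖L‖`, the inverse of `P + L + ik P^⊥` is given by the absolutely
convergent Neumann-type series `P - (i/k) Σ_{r≥0} k^{-r} P^⊥ (iL)^r P^⊥`. -/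
theorem inverse_series_expansion
    (E : ℕ) (P L : Matrix (Fin E) (Fin E) ℂ)
    (hP : P.IsHermitian) (hP2 : P * P = P)
    (hL : L.IsHermitian) (hLP : (1 - P) * L * (1 - P) = L)
    (k : ℝ) (hk : ‖L‖ < |k|) :
    Summable
      (fun r : ℕ => ‖((k : ℂ) ^ (-(r : ℤ))) •
          ((1 - P) * (Complex.I • L) ^ r * (1 - P))‖) ∧
    (P + L + (Complex.I * (k : ℂ)) • (1 - P))⁻¹
      = P - (Complex.I / (k : ℂ)) •
          ∑' r : ℕ, ((k : ℂ) ^ (-(r : ℤ))) •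
            ((1 - P) * (Complex.I • L) ^ r * (1 - P)) :=
  inverse_series_expansion_general E P L hP2 hLP k hk
end

section
/- Laplace transform asymptotics (Watson-type): if f : (0,∞) → ℂ is continuous with e^{-ct} f(t) integrable for some c > 0, and f(t) = a·t^{d-1} + O(t^{d'-1}) as t → 0⁺ with 0 < d < d', then F(z) = ∫₀^∞ e^{-zt} f(t) dt satisfies, for real z → ∞, F(z) - aΓ(d)z^{-d} = O(z^{-d'}). -/
open MeasureTheory Filter Real Asymptotics

set_option maxHeartbeats 1000000 in
/-- Watson-type Laplace transform asymptotics: if `f(t) = a t^{d-1} + O(t^{d'-1})`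
as `t → 0⁺` and `e^{-ct} f` is integrable, then the Laplace transform satisfies
`F(z) = a Γ(d) z^{-d} + O(z^{-d'})` as `z → ∞` along the reals. -/
theorem laplace_transform_asymptotics
    (f : ℝ → ℂ) (hf : ContinuousOn f (Set.Ioi 0))
    (c : ℝ) (hc : 0 < c)
    (hint : IntegrableOn (fun t => Real.exp (-c * t) * ‖f t‖) (Set.Ioi 0))
    (a : ℂ) (d d' : ℝ) (hd : 0 < d) (hdd' : d < d')
    (hasymp : (fun t : ℝ => f t - a * ((t ^ (d - 1) : ℝ) : ℂ))
        =O[nhdsWithin 0 (Set.Ioi 0)] fun t : ℝ => (t ^ (d' - 1) : ℝ)) :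
    (fun z : ℝ => (∫ t in Set.Ioi (0 : ℝ), Complex.exp (-(z : ℂ) * t) * f t)
        - a * ((Real.Gamma d : ℝ) : ℂ) * ((z ^ (-d) : ℝ) : ℂ))
      =O[atTop] fun z : ℝ => (z ^ (-d') : ℝ) := by
  have hd' : (0:ℝ) < d' := hd.trans hdd'
  set g : ℝ → ℂ := fun t => f t - a * ((t ^ (d - 1) : ℝ) : ℂ) with hgdef
  have hexp : ∀ z t : ℝ, Complex.exp (-(z:ℂ)*t) = ((Real.exp (-(z*t)) : ℝ) : ℂ) := by
    intro z t; rw [Complex.ofReal_exp]; push_cast; ring_nf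
  have measf : AEStronglyMeasurable f (volume.restrict (Set.Ioi 0)) :=
    hf.aestronglyMeasurable measurableSet_Ioi
  have contpow : ContinuousOn (fun t : ℝ => ((t ^ (d-1) : ℝ) : ℂ)) (Set.Ioi 0) :=
    Complex.continuous_ofReal.comp_continuousOn
      (fun t ht => (Real.continuousAt_rpow_const t _ (Or.inl (ne_of_gt ht))).continuousWithinAt)
  have contg : ContinuousOn g (Set.Ioi 0) := hf.sub (continuousOn_const.mul contpow)
  -- extract C, δ bound near 0
  obtain ⟨C, hC, hCb⟩ := hasymp.exists_pos
  rw [IsBigOWith, eventually_nhdsWithin_iff, Metric.eventually_nhds_iff] at hCb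
  obtain ⟨δ, hδ, hCb⟩ := hCb
  replace hCb : ∀ t ∈ Set.Ioo (0:ℝ) δ, ‖g t‖ ≤ C * t ^ (d' - 1) := by
    intro t ht
    have := hCb (by rw [Real.dist_eq, sub_zero, abs_of_pos ht.1]; exact ht.2) ht.1
    rwa [Real.norm_eq_abs, abs_of_nonneg (rpow_nonneg ht.1.le _)] at this
  set ε : ℝ := δ/2 with hεdef
  have hε : 0 < ε := half_pos hδ
  -- power kernel integrability and value
  have hpow : ∀ (s z : ℝ), 0 < s → 0 < z →
      IntegrableOn (fun t : ℝ => t ^ (s - 1) * Real.exp (-(z * t))) (Set.Ioi 0) := by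
    intro s z hs hz
    have := integrableOn_rpow_mul_exp_neg_mul_rpow (p := 1) (s := s - 1) (b := z)
      (by linarith) one_pos hz
    simpa [Real.rpow_one, neg_mul] using this
  have hkereq : ∀ (s z : ℝ), (fun t : ℝ => Complex.exp (-(z:ℂ)*t) * ((t ^ (s-1) : ℝ):ℂ))
      = fun t => (((t ^ (s-1) * Real.exp (-(z*t)) : ℝ)) : ℂ) := by
    intro s z; funext t; rw [hexp]; push_cast; ring
  have hpowC : ∀ (s z : ℝ), 0 < s → 0 < z →
      IntegrableOn (fun t : ℝ => Complex.exp (-(z:ℂ)*t) * ((t ^ (s-1) : ℝ):ℂ)) (Set.Ioi 0) := by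
    intro s z hs hz
    rw [hkereq]
    exact (hpow s z hs hz).ofReal
  have hval : ∀ (s z : ℝ), 0 < s → 0 < z →
      ∫ t in Set.Ioi (0:ℝ), Complex.exp (-(z:ℂ)*t) * ((t ^ (s-1) : ℝ):ℂ)
        = ((Real.Gamma s * z ^ (-s) : ℝ) : ℂ) := by
    intro s z hs hz
    rw [hkereq]
    rw [show (∫ t in Set.Ioi (0:ℝ), (((t ^ (s-1) * Real.exp (-(z*t)) : ℝ)) : ℂ))
        = ((∫ t in Set.Ioi (0:ℝ), t ^ (s-1) * Real.exp (-(z*t)) : ℝ) : ℂ) from integral_ofReal]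
    rw [Real.integral_rpow_mul_exp_neg_mul_Ioi hs hz]
    norm_cast
    rw [one_div, Real.inv_rpow hz.le, ← Real.rpow_neg hz.le, mul_comm]
  -- integrability of e^{-ct} ‖g t‖ on Ioi 0
  have hgint : IntegrableOn (fun t => Real.exp (-c*t) * ‖g t‖) (Set.Ioi 0) := by
    refine Integrable.mono' (hint.add (((hpow d c hd hc).const_mul ‖a‖))) ?_ ?_
    · exact (((Real.continuous_exp.comp (continuous_const.mul continuous_id)).continuousOn).mul
        contg.norm).aestronglyMeasurable measurableSet_Ioi
    · filter_upwards [self_mem_ae_restrict measurableSet_Ioi] with t ht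
      have h1 : ‖g t‖ ≤ ‖f t‖ + ‖a‖ * t ^ (d-1) := by
        calc ‖g t‖ ≤ ‖f t‖ + ‖a * ((t ^ (d-1) : ℝ):ℂ)‖ := norm_sub_le _ _
        _ = ‖f t‖ + ‖a‖ * t ^ (d-1) := by
            rw [norm_mul, Complex.norm_real, Real.norm_eq_abs,
              abs_of_nonneg (rpow_nonneg (le_of_lt ht) _)]
      have he : (0:ℝ) ≤ Real.exp (-c*t) := (Real.exp_pos _).le
      rw [Real.norm_eq_abs, abs_of_nonneg (mul_nonneg he (norm_nonneg _))]
      calc Real.exp (-c*t) * ‖g t‖ ≤ Real.exp (-c*t) * (‖f t‖ + ‖a‖ * t ^ (d-1)) :=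
            mul_le_mul_of_nonneg_left h1 he
      _ = Real.exp (-c*t) * ‖f t‖ + ‖a‖ * (t ^ (d-1) * Real.exp (-(c*t))) := by
            rw [neg_mul]; ring

  -- constant K for tail integral
  set K : ℝ := ∫ t in Set.Ioi ε, Real.exp (-c*t) * ‖g t‖ with hKdef
  have hK0 : 0 ≤ K := setIntegral_nonneg measurableSet_Ioi
    (fun t ht => mul_nonneg (Real.exp_pos _).le (norm_nonneg _))
  -- eventual exponential vs rpow bound
  have hev : ∀ᶠ z : ℝ in atTop, Real.exp (-((z - c) * ε)) ≤ z ^ (-d') := by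
    have h0 : Tendsto (fun z : ℝ => Real.exp (c*ε) * (z ^ d' * Real.exp (-ε * z)))
        atTop (nhds 0) := by
      simpa using (tendsto_rpow_mul_exp_neg_mul_atTop_nhds_zero d' ε hε).const_mul
        (Real.exp (c*ε))
    have h1 : ∀ᶠ z : ℝ in atTop, Real.exp (c*ε) * (z ^ d' * Real.exp (-ε * z)) < 1 :=
      h0.eventually_lt_const one_pos
    filter_upwards [h1, eventually_gt_atTop 0] with z h1 hz0
    have hzd : (0:ℝ) < z ^ d' := rpow_pos_of_pos hz0 _
    have heq : Real.exp (-((z - c) * ε)) = Real.exp (c*ε) * Real.exp (-ε*z) := by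
      rw [← Real.exp_add]; ring_nf
    rw [Real.rpow_neg hz0.le, heq, inv_eq_one_div, le_div_iff₀ hzd]
    nlinarith [h1]
  -- near-zero piece
  have hI1 : (fun z : ℝ => ∫ t in Set.Ioc (0:ℝ) ε, Complex.exp (-(z:ℂ)*t) * g t)
      =O[atTop] fun z : ℝ => (z ^ (-d') : ℝ) := by
    refine IsBigO.of_bound (C * Real.Gamma d') ?_
    filter_upwards [eventually_gt_atTop 0] with z hz0
    have hker := hpow d' z hd' hz0
    have hbound : ‖∫ t in Set.Ioc (0:ℝ) ε, Complex.exp (-(z:ℂ)*t) * g t‖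
        ≤ ∫ t in Set.Ioc (0:ℝ) ε, C * (t ^ (d'-1) * Real.exp (-(z*t))) := by
      refine norm_integral_le_of_norm_le
        ((hker.mono_set Set.Ioc_subset_Ioi_self).const_mul C) ?_
      filter_upwards [self_mem_ae_restrict measurableSet_Ioc] with t ht
      rw [norm_mul, hexp, Complex.norm_real, Real.norm_eq_abs,
        abs_of_nonneg (Real.exp_pos _).le]
      have hb := hCb t ⟨ht.1, lt_of_le_of_lt ht.2 (half_lt_self hδ)⟩
      calc Real.exp (-(z*t)) * ‖g t‖ ≤ Real.exp (-(z*t)) * (C * t ^ (d'-1)) :=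
            mul_le_mul_of_nonneg_left hb (Real.exp_pos _).le
        _ = C * (t ^ (d'-1) * Real.exp (-(z*t))) := by ring
    have hmono : ∫ t in Set.Ioc (0:ℝ) ε, t ^ (d'-1) * Real.exp (-(z*t))
        ≤ ∫ t in Set.Ioi (0:ℝ), t ^ (d'-1) * Real.exp (-(z*t)) := by
      refine setIntegral_mono_set hker ?_ Set.Ioc_subset_Ioi_self.eventuallyLE
      filter_upwards [self_mem_ae_restrict measurableSet_Ioi] with t ht
      exact mul_nonneg (rpow_nonneg (le_of_lt ht) _) (Real.exp_pos _).le
    calc ‖∫ t in Set.Ioc (0:ℝ) ε, Complex.exp (-(z:ℂ)*t) * g t‖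
        ≤ ∫ t in Set.Ioc (0:ℝ) ε, C * (t ^ (d'-1) * Real.exp (-(z*t))) := hbound
      _ = C * ∫ t in Set.Ioc (0:ℝ) ε, t ^ (d'-1) * Real.exp (-(z*t)) := integral_const_mul _ _
      _ ≤ C * ∫ t in Set.Ioi (0:ℝ), t ^ (d'-1) * Real.exp (-(z*t)) :=
            mul_le_mul_of_nonneg_left hmono hC.le
      _ = C * ((1/z) ^ d' * Real.Gamma d') := by
            rw [Real.integral_rpow_mul_exp_neg_mul_Ioi hd' hz0]
      _ = C * Real.Gamma d' * ‖(z ^ (-d') : ℝ)‖ := by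
            rw [Real.norm_eq_abs, abs_of_nonneg (rpow_nonneg hz0.le _), one_div,
              Real.inv_rpow hz0.le, ← Real.rpow_neg hz0.le]
            ring
  -- tail piece
  have hI2 : (fun z : ℝ => ∫ t in Set.Ioi ε, Complex.exp (-(z:ℂ)*t) * g t)
      =O[atTop] fun z : ℝ => (z ^ (-d') : ℝ) := by
    refine IsBigO.of_bound K ?_
    filter_upwards [hev, eventually_ge_atTop c, eventually_gt_atTop 0] with z hevz hzc hz0
    have hbound : ‖∫ t in Set.Ioi ε, Complex.exp (-(z:ℂ)*t) * g t‖
        ≤ ∫ t in Set.Ioi ε, Real.exp (-((z-c)*ε)) * (Real.exp (-c*t) * ‖g t‖) := by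
      refine norm_integral_le_of_norm_le
        ((hgint.mono_set (Set.Ioi_subset_Ioi hε.le)).const_mul _) ?_
      filter_upwards [self_mem_ae_restrict measurableSet_Ioi] with t ht
      rw [norm_mul, hexp, Complex.norm_real, Real.norm_eq_abs,
        abs_of_nonneg (Real.exp_pos _).le]
      have h2 : Real.exp (-(z*t)) = Real.exp (-((z-c)*t)) * Real.exp (-c*t) := by
        rw [← Real.exp_add]; ring_nf
      have h3 : Real.exp (-((z-c)*t)) ≤ Real.exp (-((z-c)*ε)) := by
        apply Real.exp_le_exp.mpr
        have : (z-c)*ε ≤ (z-c)*t :=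
          mul_le_mul_of_nonneg_left (le_of_lt ht) (sub_nonneg.mpr hzc)
        linarith
      calc Real.exp (-(z*t)) * ‖g t‖
          = Real.exp (-((z-c)*t)) * (Real.exp (-c*t) * ‖g t‖) := by rw [h2]; ring
        _ ≤ Real.exp (-((z-c)*ε)) * (Real.exp (-c*t) * ‖g t‖) :=
            mul_le_mul_of_nonneg_right h3
              (mul_nonneg (Real.exp_pos _).le (norm_nonneg _))
    calc ‖∫ t in Set.Ioi ε, Complex.exp (-(z:ℂ)*t) * g t‖
        ≤ ∫ t in Set.Ioi ε, Real.exp (-((z-c)*ε)) * (Real.exp (-c*t) * ‖g t‖) := hbound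
      _ = Real.exp (-((z-c)*ε)) * K := integral_const_mul _ _
      _ ≤ z ^ (-d') * K := mul_le_mul_of_nonneg_right hevz hK0
      _ = K * ‖(z ^ (-d') : ℝ)‖ := by
            rw [Real.norm_eq_abs, abs_of_nonneg (rpow_nonneg hz0.le _)]; ring
  -- eventual identity
  have hEv : (fun z : ℝ => (∫ t in Set.Ioi (0 : ℝ), Complex.exp (-(z : ℂ) * t) * f t)
        - a * ((Real.Gamma d : ℝ) : ℂ) * ((z ^ (-d) : ℝ) : ℂ))
      =ᶠ[atTop] fun z : ℝ => (∫ t in Set.Ioc (0:ℝ) ε, Complex.exp (-(z:ℂ)*t) * g t)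
        + ∫ t in Set.Ioi ε, Complex.exp (-(z:ℂ)*t) * g t := by
    filter_upwards [eventually_ge_atTop c, eventually_gt_atTop 0] with z hzc hz0
    have hfz : IntegrableOn (fun t : ℝ => Complex.exp (-(z:ℂ)*t) * f t) (Set.Ioi 0) := by
      refine Integrable.mono' hint ?_ ?_
      · refine (ContinuousOn.mul ?_ hf).aestronglyMeasurable measurableSet_Ioi
        exact (Complex.continuous_exp.comp
          ((continuous_const.mul Complex.continuous_ofReal))).continuousOn
      · filter_upwards [self_mem_ae_restrict measurableSet_Ioi] with t ht
        rw [norm_mul, hexp, Complex.norm_real, Real.norm_eq_abs,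
          abs_of_nonneg (Real.exp_pos _).le]
        refine mul_le_mul_of_nonneg_right (Real.exp_le_exp.mpr ?_) (norm_nonneg _)
        have ht0 : (0:ℝ) < t := ht
        nlinarith
    have hpz := hpowC d z hd hz0
    have hgz : IntegrableOn (fun t : ℝ => Complex.exp (-(z:ℂ)*t) * g t) (Set.Ioi 0) := by
      have heq2 : (fun t : ℝ => Complex.exp (-(z:ℂ)*t) * g t)
          = fun t : ℝ => Complex.exp (-(z:ℂ)*t) * f t
            - a * (Complex.exp (-(z:ℂ)*t) * ((t^(d-1):ℝ):ℂ)) := by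
        funext t; simp only [hgdef]; ring
      rw [heq2]; exact hfz.sub (hpz.const_mul a)
    have split : (∫ t in Set.Ioi (0:ℝ), Complex.exp (-(z:ℂ)*t) * g t)
        = (∫ t in Set.Ioc (0:ℝ) ε, Complex.exp (-(z:ℂ)*t) * g t)
          + ∫ t in Set.Ioi ε, Complex.exp (-(z:ℂ)*t) * g t := by
      rw [← setIntegral_union (Set.Ioc_disjoint_Ioi le_rfl) measurableSet_Ioi
        (hgz.mono_set Set.Ioc_subset_Ioi_self) (hgz.mono_set (Set.Ioi_subset_Ioi hε.le)),
        Set.Ioc_union_Ioi_eq_Ioi hε.le]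
    rw [← split]
    have hrw : (∫ t in Set.Ioi (0:ℝ), Complex.exp (-(z:ℂ)*t) * g t)
        = (∫ t in Set.Ioi (0:ℝ), Complex.exp (-(z:ℂ)*t) * f t)
          - a * ∫ t in Set.Ioi (0:ℝ), Complex.exp (-(z:ℂ)*t) * ((t^(d-1):ℝ):ℂ) := by
      rw [← integral_const_mul, ← integral_sub hfz (hpz.const_mul a)]
      congr 1; funext t; simp only [hgdef]; ring
    rw [hrw, hval d z hd hz0]
    push_cast; ring
  exact (hI1.add hI2).congr' hEv.symm EventuallyEq.rfl
end
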